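/- arXiv:1912.11898 — 2 statements merged into one kernel-verified Lean document; each statement's English description precedes it below -/
import Mathlib

section
/- Let Fₙ be the free group on x₁, …, xₙ, with Rᵢ the transposition automorphism and Sᵢ the Artin automorphism as above. Then for 1 ≤ i ≤ n−2: S_{i+1} ∘ Sᵢ ∘ R_{i+1} = Rᵢ ∘ S_{i+1} ∘ Sᵢ. -/
/-!
On the generators `a = xᵢ`, `b = x_{i+1}`, `c = x_{i+2}` both sides act as
`a ↦ c`, `b ↦ c⁻¹ b c`, `c ↦ c⁻¹ a c`, and they fix every other generator; a homomorphism
out of a free group is determined by its values on the generators.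
-/

/-- The free group `Fₙ` on generators `x₀, …, x_{n-1}` (0-based indexing). -/
abbrev FG (n : ℕ) := FreeGroup (Fin n)

/-- The generator `xᵢ`. -/
def X {n : ℕ} (i : Fin n) : FG n := FreeGroup.of i

def fin0 (n i : ℕ) (h : i + 1 < n) : Fin n := ⟨i, Nat.lt_of_succ_lt h⟩
def fin1 (n i : ℕ) (h : i + 1 < n) : Fin n := ⟨i + 1, h⟩

/-- The Artin automorphism `Sᵢ : xᵢ ↦ x_{i+1}, x_{i+1} ↦ x_{i+1}⁻¹ xᵢ x_{i+1}`,
fixing the other generators. -/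
def ArtinS (n i : ℕ) (h : i + 1 < n) : FG n →* FG n :=
  FreeGroup.lift fun j =>
    if (j : ℕ) = i then X (fin1 n i h)
    else if (j : ℕ) = i + 1 then (X (fin1 n i h))⁻¹ * X (fin0 n i h) * X (fin1 n i h)
    else X j

/-- The transposition automorphism `Rᵢ : xᵢ ↔ x_{i+1}`, fixing the other generators. -/
def PermR (n i : ℕ) (h : i + 1 < n) : FG n →* FG n :=
  FreeGroup.lift fun j =>
    if (j : ℕ) = i then X (fin1 n i h)
    else if (j : ℕ) = i + 1 then X (fin0 n i h)
    else X j

/-- The inversion automorphism `Tᵢ : xᵢ ↦ xᵢ⁻¹`, fixing the other generators. -/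
def InvT (n i : ℕ) (h : i < n) : FG n →* FG n :=
  FreeGroup.lift fun j => if (j : ℕ) = i then (X (⟨i, h⟩ : Fin n))⁻¹ else X j

section Generators

variable {n i : ℕ} (h : i + 1 < n) {j : Fin n}

lemma ArtinS_X_of_eq (hj : (j : ℕ) = i) : ArtinS n i h (X j) = X (fin1 n i h) := by
  simp [ArtinS, X, hj]

lemma ArtinS_X_of_eq_succ (hj : (j : ℕ) = i + 1) :
    ArtinS n i h (X j) = (X (fin1 n i h))⁻¹ * X (fin0 n i h) * X (fin1 n i h) := by
  simp [ArtinS, X, hj]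

lemma ArtinS_X_of_ne (hj : (j : ℕ) ≠ i) (hj' : (j : ℕ) ≠ i + 1) : ArtinS n i h (X j) = X j := by
  simp [ArtinS, X, hj, hj']

lemma PermR_X_of_eq (hj : (j : ℕ) = i) : PermR n i h (X j) = X (fin1 n i h) := by
  simp [PermR, X, hj]

lemma PermR_X_of_eq_succ (hj : (j : ℕ) = i + 1) : PermR n i h (X j) = X (fin0 n i h) := by
  simp [PermR, X, hj]

lemma PermR_X_of_ne (hj : (j : ℕ) ≠ i) (hj' : (j : ℕ) ≠ i + 1) : PermR n i h (X j) = X j := by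
  simp [PermR, X, hj, hj']

end Generators

/-- mixed relation `S_{i+1} ∘ Sᵢ ∘ R_{i+1} = Rᵢ ∘ S_{i+1} ∘ Sᵢ`. -/
theorem artin_mixed_relation_SSR (n i : ℕ) (h2 : i + 2 < n) (h1 : i + 1 < n) :
    (ArtinS n (i + 1) h2).comp ((ArtinS n i h1).comp (PermR n (i + 1) h2)) =
      (PermR n i h1).comp ((ArtinS n (i + 1) h2).comp (ArtinS n i h1)) := by
  refine FreeGroup.ext_hom _ _ fun j => ?_
  show ArtinS n (i + 1) h2 (ArtinS n i h1 (PermR n (i + 1) h2 (X j))) =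
    PermR n i h1 (ArtinS n (i + 1) h2 (ArtinS n i h1 (X j)))
  have hj_cases : (j : ℕ) = i ∨ (j : ℕ) = i + 1 ∨ (j : ℕ) = i + 2 ∨
      ((j : ℕ) ≠ i ∧ (j : ℕ) ≠ i + 1 ∧ (j : ℕ) ≠ i + 2) := by omega
  rcases hj_cases with hj | hj | hj | ⟨hj, hj', hj''⟩ <;>
  simp (disch := grind) only [ArtinS_X_of_eq, ArtinS_X_of_eq_succ,
    ArtinS_X_of_ne, PermR_X_of_eq, PermR_X_of_eq_succ, PermR_X_of_ne, map_mul, map_inv, fin0, fin1]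
end

section
/- With 𝒮ᵢ the lifted Artin automorphisms of the pair (Fₙ, Mₙ) as defined above, for 1 ≤ i ≤ n−2 the braid relation 𝒮ᵢ ∘ 𝒮_{i+1} ∘ 𝒮ᵢ = 𝒮_{i+1} ∘ 𝒮ᵢ ∘ 𝒮_{i+1} holds; in particular, the second components agree on each generator Kⱼ. -/
/-- The group ring `ℤ[Fₙ]`. -/
abbrev GR (n : ℕ) := MonoidAlgebra ℤ (FG n)
/-- The free `ℤ[Fₙ]`-module `Mₙ` on `K₀, …, K_{n-1}`. -/
abbrev M (n : ℕ) := Fin n →₀ GR n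

/-- The module generator `Kᵢ`. -/
noncomputable def K {n : ℕ} (i : Fin n) : M n := Finsupp.single i 1

/-- The action `g ▷ m` of `Fₙ` on `Mₙ`, via the `ℤ[Fₙ]`-module structure. -/
noncomputable def act {n : ℕ} (g : FG n) (m : M n) : M n :=
  (MonoidAlgebra.of ℤ (FG n) g) • m

/-- The additive endomorphism of `Mₙ`, semilinear over the group endomorphism `f1`
(i.e. `m ↦ g ▷ m` goes to `m ↦ f1 g ▷ m`), determined by the images `t i` of the
generators `K i`. -/
noncomputable def lift2 {n : ℕ} (f1 : FG n →* FG n) (t : Fin n → M n) : M n →+ M n :=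
  Finsupp.liftAddHom fun i =>
    { toFun := fun r => (MonoidAlgebra.mapDomainRingHom ℤ f1 r) • t i
      map_zero' := by simp
      map_add' := by intro a b; (try simp only []); rw [map_add, add_smul] }

/-- First component of the lifted Artin automorphism `𝒮ᵢ`. -/
def S1 (n i : ℕ) (h : i + 1 < n) : FG n →* FG n :=
  FreeGroup.lift fun j =>
    if (j : ℕ) = i then X (fin1 n i h)
    else if (j : ℕ) = i + 1 then (X (fin1 n i h))⁻¹ * X (fin0 n i h) * X (fin1 n i h)
    else X j

/-- Second component of the lifted Artin automorphism `𝒮ᵢ`: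
`Kᵢ ↦ Kᵢ + K_{i+1} − x_{i+1}⁻¹ ▷ Kᵢ`, `K_{i+1} ↦ x_{i+1}⁻¹ ▷ Kᵢ`, fixing other `Kⱼ`,
extended semilinearly over `𝒮ᵢ¹`. -/
noncomputable def S2 (n i : ℕ) (h : i + 1 < n) : M n →+ M n :=
  lift2 (S1 n i h) fun j =>
    if (j : ℕ) = i then
      K (fin0 n i h) + K (fin1 n i h) - act (X (fin1 n i h))⁻¹ (K (fin0 n i h))
    else if (j : ℕ) = i + 1 then act (X (fin1 n i h))⁻¹ (K (fin0 n i h))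
    else K j

/-- First component of the inverse `𝒮̄ᵢ`: `xᵢ ↦ xᵢ x_{i+1} xᵢ⁻¹`, `x_{i+1} ↦ xᵢ`. -/
def Sbar1 (n i : ℕ) (h : i + 1 < n) : FG n →* FG n :=
  FreeGroup.lift fun j =>
    if (j : ℕ) = i then X (fin0 n i h) * X (fin1 n i h) * (X (fin0 n i h))⁻¹
    else if (j : ℕ) = i + 1 then X (fin0 n i h)
    else X j

/-- Second component of the inverse `𝒮̄ᵢ`: `Kᵢ ↦ xᵢ ▷ K_{i+1}`,
`K_{i+1} ↦ Kᵢ + K_{i+1} − xᵢ ▷ K_{i+1}`, fixing other `Kⱼ`. -/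
noncomputable def Sbar2 (n i : ℕ) (h : i + 1 < n) : M n →+ M n :=
  lift2 (Sbar1 n i h) fun j =>
    if (j : ℕ) = i then act (X (fin0 n i h)) (K (fin1 n i h))
    else if (j : ℕ) = i + 1 then
      K (fin0 n i h) + K (fin1 n i h) - act (X (fin0 n i h)) (K (fin1 n i h))
    else K j

/-- First component of the transposition automorphism `ℛᵢ`. -/
def R1 (n i : ℕ) (h : i + 1 < n) : FG n →* FG n :=
  FreeGroup.lift fun j =>
    if (j : ℕ) = i then X (fin1 n i h)
    else if (j : ℕ) = i + 1 then X (fin0 n i h)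
    else X j

/-- Second component of `ℛᵢ`: swaps `Kᵢ` and `K_{i+1}`, fixing other `Kⱼ`. -/
noncomputable def R2 (n i : ℕ) (h : i + 1 < n) : M n →+ M n :=
  lift2 (R1 n i h) fun j =>
    if (j : ℕ) = i then K (fin1 n i h)
    else if (j : ℕ) = i + 1 then K (fin0 n i h)
    else K j

/-- First component of the inversion automorphism `𝒯ᵢ`: `xᵢ ↦ xᵢ⁻¹`. -/
def T1 (n i : ℕ) (h : i < n) : FG n →* FG n :=
  FreeGroup.lift fun j => if (j : ℕ) = i then (X (⟨i, h⟩ : Fin n))⁻¹ else X j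

/-- Second component of `𝒯ᵢ`: fixes each `Kⱼ`, extended semilinearly over `𝒯ᵢ¹`. -/
noncomputable def T2 (n i : ℕ) (h : i < n) : M n →+ M n :=
  lift2 (T1 n i h) fun j => K j

/-! Both components of a composite of `𝒮`'s are determined by generators: the first because
`Fₙ` is free, the second because a composite of maps semilinear over `𝒮¹`'s is `lift2` of the
composite of those `𝒮¹`'s with its values on the `Kⱼ`. So the braid relation reduces to checking
it on `xⱼ` and on `Kⱼ`; both sides fix every generator of index outside `{i, i+1, i+2}`, and the
three remaining cases are direct computations in `Fₙ` and `Mₙ`. -/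

section Lift2

variable {n : ℕ}

theorem lift2_single (f : FG n →* FG n) (t : Fin n → M n) (j : Fin n) (r : GR n) :
    lift2 f t (Finsupp.single j r) = MonoidAlgebra.mapDomainRingHom ℤ f r • t j :=
  Finsupp.liftAddHom_apply_single _ _ _

theorem lift2_K (f : FG n →* FG n) (t : Fin n → M n) (j : Fin n) : lift2 f t (K j) = t j := by
  rw [K, lift2_single, map_one, one_smul]

theorem lift2_smul (f : FG n →* FG n) (t : Fin n → M n) (r : GR n) (m : M n) :
    lift2 f t (r • m) = MonoidAlgebra.mapDomainRingHom ℤ f r • lift2 f t m := by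
  induction m using Finsupp.induction with
  | zero => simp
  | single_add j s m _ _ ih =>
    rw [smul_add, map_add, map_add, smul_add, ih, Finsupp.smul_single, lift2_single,
      lift2_single, smul_eq_mul, map_mul, mul_smul]

theorem lift2_act (f : FG n →* FG n) (t : Fin n → M n) (g : FG n) (m : M n) :
    lift2 f t (act g m) = act (f g) (lift2 f t m) := by
  rw [act, act, lift2_smul]
  simp [MonoidAlgebra.of_apply, MonoidAlgebra.mapDomain_single]

theorem lift2_comp (f g : FG n →* FG n) (t u : Fin n → M n) :
    (lift2 f t).comp (lift2 g u) = lift2 (f.comp g) fun j => lift2 f t (u j) := by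
  refine Finsupp.addHom_ext fun j r => ?_
  simp only [AddMonoidHom.comp_apply, lift2_single, lift2_smul,
    MonoidAlgebra.mapDomainRingHom_comp, RingHom.comp_apply]

end Lift2

section Act

variable {n : ℕ}

theorem act_mul (g h : FG n) (m : M n) : act (g * h) m = act g (act h m) := by
  simp [act, MonoidAlgebra.of_apply, smul_smul, MonoidAlgebra.single_mul_single]

theorem act_add (g : FG n) (m m' : M n) : act g (m + m') = act g m + act g m' :=
  smul_add _ _ _

theorem act_sub (g : FG n) (m m' : M n) : act g (m - m') = act g m - act g m' :=
  smul_sub _ _ _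

end Act

section Artin

variable {n i : ℕ}

theorem S1_X (h : i + 1 < n) (j : Fin n) :
    S1 n i h (X j) =
      if (j : ℕ) = i then X (fin1 n i h)
      else if (j : ℕ) = i + 1 then (X (fin1 n i h))⁻¹ * X (fin0 n i h) * X (fin1 n i h)
      else X j :=
  FreeGroup.lift_apply_of

theorem S2_K (h : i + 1 < n) (j : Fin n) :
    S2 n i h (K j) =
      if (j : ℕ) = i then
        K (fin0 n i h) + K (fin1 n i h) - act (X (fin1 n i h))⁻¹ (K (fin0 n i h))
      else if (j : ℕ) = i + 1 then act (X (fin1 n i h))⁻¹ (K (fin0 n i h))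
      else K j :=
  lift2_K _ _ _

theorem S2_act (h : i + 1 < n) (g : FG n) (m : M n) :
    S2 n i h (act g m) = act (S1 n i h g) (S2 n i h m) :=
  lift2_act _ _ _ _

theorem S2_comp_S2_comp_S2 {k l m : ℕ} (hk : k + 1 < n) (hl : l + 1 < n) (hm : m + 1 < n) :
    (S2 n k hk).comp ((S2 n l hl).comp (S2 n m hm)) =
      lift2 ((S1 n k hk).comp ((S1 n l hl).comp (S1 n m hm)))
        fun j => S2 n k hk (S2 n l hl (S2 n m hm (K j))) := by
  simp only [S2, lift2_comp, lift2_K]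

theorem S1_braid_X (h2 : i + 2 < n) (h1 : i + 1 < n) (j : Fin n) :
    S1 n i h1 (S1 n (i + 1) h2 (S1 n i h1 (X j))) =
      S1 n (i + 1) h2 (S1 n i h1 (S1 n (i + 1) h2 (X j))) := by
  obtain ⟨j, hj⟩ := j
  obtain rfl | rfl | rfl | ⟨hne0, hne1, hne2⟩ :
      i = j ∨ i + 1 = j ∨ i + 2 = j ∨ (j ≠ i ∧ j ≠ i + 1 ∧ j ≠ i + 1 + 1) := by omega
  all_goals simp [S1_X, fin0, fin1, mul_assoc, show i + 1 + 1 ≠ i by omega,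
    show i ≠ i + 1 + 1 by omega, *]

theorem S1_braid (h2 : i + 2 < n) (h1 : i + 1 < n) :
    (S1 n i h1).comp ((S1 n (i + 1) h2).comp (S1 n i h1)) =
      (S1 n (i + 1) h2).comp ((S1 n i h1).comp (S1 n (i + 1) h2)) :=
  FreeGroup.ext_hom _ _ (S1_braid_X h2 h1)

theorem S2_braid_K (h2 : i + 2 < n) (h1 : i + 1 < n) (j : Fin n) :
    S2 n i h1 (S2 n (i + 1) h2 (S2 n i h1 (K j))) =
      S2 n (i + 1) h2 (S2 n i h1 (S2 n (i + 1) h2 (K j))) := by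
  obtain ⟨j, hj⟩ := j
  obtain rfl | rfl | rfl | ⟨hne0, hne1, hne2⟩ :
      i = j ∨ i + 1 = j ∨ i + 2 = j ∨ (j ≠ i ∧ j ≠ i + 1 ∧ j ≠ i + 1 + 1) := by omega
  all_goals simp [S2_K, S2_act, S1_X, act_add, act_sub, ← act_mul, fin0, fin1, mul_assoc,
      show i + 1 + 1 ≠ i by omega, show i ≠ i + 1 + 1 by omega, *]
  abel

end Artin

/-- braid relation `𝒮ᵢ ∘ 𝒮_{i+1} ∘ 𝒮ᵢ = 𝒮_{i+1} ∘ 𝒮ᵢ ∘ 𝒮_{i+1}` for the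
lifted Artin automorphisms of the pair `(Fₙ, Mₙ)`; in particular the second components
agree (on each generator `Kⱼ`, hence everywhere). -/
theorem liftedArtin_braid (n i : ℕ) (h2 : i + 2 < n) (h1 : i + 1 < n) :
    (S1 n i h1).comp ((S1 n (i + 1) h2).comp (S1 n i h1)) =
      (S1 n (i + 1) h2).comp ((S1 n i h1).comp (S1 n (i + 1) h2)) ∧
    (S2 n i h1).comp ((S2 n (i + 1) h2).comp (S2 n i h1)) =
      (S2 n (i + 1) h2).comp ((S2 n i h1).comp (S2 n (i + 1) h2)) := by
  refine ⟨S1_braid h2 h1, ?_⟩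
  rw [S2_comp_S2_comp_S2, S2_comp_S2_comp_S2, S1_braid h2 h1]
  exact congrArg _ (funext (S2_braid_K h2 h1))
end
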